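/- arXiv:2603.04199 — 4 statements merged into one kernel-verified Lean document; each statement's English description precedes it below -/
import Mathlib

section
/- In the coin-toss model under the randomised response mechanism q^(ω) for ω ∈ [0,1], Eve's decision δ = 1 minimizes her posterior expected loss given the release value η = 1 if and only if ω ≤ 10/13, and minimizes it given η = 0 if and only if ω ≥ 3/13. In particular, for every ω ∈ [3/13, 10/13] the constant rule δ_E ≡ 1 is Bayes-optimal for Eve regardless of the release value. -/
open scoped BigOperators

namespace CoinToss

/-- The parameter θ ∈ {0, 1/2}, encoded by a Bool: `false ↦ 0`, `true ↦ 1/2`. -/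
noncomputable def thetaVal (t : Bool) : ℝ := if t then 1/2 else 0

/-- Joint pmf of (θ, X): prior P(θ=0)=P(θ=1/2)=1/2 and X | θ ~ Bern(θ). -/
noncomputable def coinJoint (t x : Bool) : ℝ :=
  if t then 1/4 else (if x then 0 else 1/2)

/-- Bob's 0-1 loss L_B(θ, δ) = 1{δ ≠ θ}. -/
noncomputable def LB (θ δ : ℝ) : ℝ := if δ = θ then 0 else 1

/-- Eve's loss: 0 if δ = x, 1 if (δ,x)=(1,0), 10 if (δ,x)=(0,1). -/
noncomputable def LE (x δ : Bool) : ℝ := if δ = x then 0 else if δ then 1 else 10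

variable {H : Type*} [Fintype H]

/-- A release mechanism: Markov kernel from the data space {0,1} to a finite release space. -/
def IsMechanism (q : Bool → H → ℝ) : Prop :=
  (∀ x h, 0 ≤ q x h) ∧ ∀ x, ∑ h, q x h = 1

/-- Probability of the release value `h` under the joint law of (θ, X, η). -/
noncomputable def relP (q : Bool → H → ℝ) (h : H) : ℝ :=
  ∑ t, ∑ x, coinJoint t x * q x h

/-- Bob's posterior expected loss of decision `d` given release value `h`. -/
noncomputable def postLossB (q : Bool → H → ℝ) (h : H) (d : ℝ) : ℝ :=
  (∑ t, ∑ x, coinJoint t x * q x h * LB (thetaVal t) d) / relP q h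

/-- Eve's posterior expected loss of decision `d` given release value `h`. -/
noncomputable def postLossE (q : Bool → H → ℝ) (h : H) (d : Bool) : ℝ :=
  (∑ t, ∑ x, coinJoint t x * q x h * LE x d) / relP q h

/-- Bayes optimality for Bob: at every release value of positive probability, the rule takes
values in the decision space {0, 1/2} and minimizes the posterior expected loss there. -/
def IsBayesB (q : Bool → H → ℝ) (dB : H → ℝ) : Prop :=
  ∀ h, 0 < relP q h →
    dB h ∈ ({0, 1/2} : Set ℝ) ∧
    ∀ d ∈ ({0, 1/2} : Set ℝ), postLossB q h (dB h) ≤ postLossB q h d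

/-- Bayes optimality for Eve. -/
def IsBayesE (q : Bool → H → ℝ) (dE : H → Bool) : Prop :=
  ∀ h, 0 < relP q h → ∀ d : Bool, postLossE q h (dE h) ≤ postLossE q h d

/-- Bob's integrated risk R_B(q) = E[L_B(θ, δ_B(η))]. -/
noncomputable def RB (q : Bool → H → ℝ) (dB : H → ℝ) : ℝ :=
  ∑ t, ∑ x, ∑ h, coinJoint t x * q x h * LB (thetaVal t) (dB h)

/-- Eve's integrated risk R_E(q) = E[L_E(X, δ_E(η))]. -/
noncomputable def RE (q : Bool → H → ℝ) (dE : H → Bool) : ℝ :=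
  ∑ t, ∑ x, ∑ h, coinJoint t x * q x h * LE x (dE h)

end CoinToss

open CoinToss

namespace CoinToss
/-- The randomised response mechanism q^(ω): release η = X with probability 1-ω and
η = 1-X with probability ω (release values encoded by Bool, `true ↦ 1`, `false ↦ 0`). -/
noncomputable def qrr (ω : ℝ) : Bool → Bool → ℝ := fun x h => if h = x then 1 - ω else ω
end CoinToss

namespace CoinToss

section

variable {H : Type*} (q : Bool → H → ℝ) (h : H)

theorem relP_eq : relP q h = 3/4 * q false h + 1/4 * q true h := by
  simp only [relP, coinJoint, Fintype.sum_bool, if_true, if_false, Bool.false_eq_true]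
  ring

theorem postLossE_true_eq : postLossE q h true = 3/4 * q false h / relP q h := by
  simp only [postLossE, coinJoint, LE, Fintype.sum_bool, if_true, if_false, Bool.false_eq_true,
    Bool.true_eq_false]
  ring_nf

theorem postLossE_false_eq : postLossE q h false = 10/4 * q true h / relP q h := by
  simp only [postLossE, coinJoint, LE, Fintype.sum_bool, if_true, if_false, Bool.false_eq_true]
  ring_nf

/-- Deciding `1` costs `P(X = 0, η = h)`, deciding `0` costs `10 P(X = 1, η = h)`, and the
marginal of `X` is `(3/4, 1/4)`. -/
theorem forall_postLossE_true_le_iff {q : Bool → H → ℝ} {h : H} (hq : 0 < relP q h) :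
    (∀ d, postLossE q h true ≤ postLossE q h d) ↔ 3 * q false h ≤ 10 * q true h := by
  simp only [Bool.forall_bool, le_refl, and_true, postLossE_true_eq, postLossE_false_eq,
    div_le_div_iff_of_pos_right hq]
  constructor <;> intro <;> linarith

end

theorem relP_qrr_pos {ω : ℝ} (hω : ω ∈ Set.Icc (0:ℝ) 1) (h : Bool) : 0 < relP (qrr ω) h := by
  obtain ⟨h0, h1⟩ := hω
  cases h <;> simp only [relP_eq, qrr] <;> norm_num <;> linarith

end CoinToss

/-- In the coin-toss model under randomised response q^(ω), ω ∈ [0,1]: Eve's decision δ = 1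
minimizes her posterior expected loss given η = 1 iff ω ≤ 10/13, and given η = 0 iff
ω ≥ 3/13. In particular, for every ω ∈ [3/13, 10/13] the constant rule δ_E ≡ 1 is
Bayes-optimal for Eve regardless of the release value. -/
theorem coin_toss_rr_eve_decision (ω : ℝ) (hω : ω ∈ Set.Icc (0:ℝ) 1) :
    ((∀ d : Bool, postLossE (qrr ω) true true ≤ postLossE (qrr ω) true d) ↔ ω ≤ 10/13) ∧
    ((∀ d : Bool, postLossE (qrr ω) false true ≤ postLossE (qrr ω) false d) ↔ 3/13 ≤ ω) ∧
    (ω ∈ Set.Icc (3/13 : ℝ) (10/13) → IsBayesE (qrr ω) (fun _ => true)) := by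
  have optimal_one := forall_postLossE_true_le_iff (relP_qrr_pos hω true)
  have optimal_zero := forall_postLossE_true_le_iff (relP_qrr_pos hω false)
  simp only [qrr, if_true, if_false, Bool.false_eq_true, Bool.true_eq_false]
    at optimal_one optimal_zero
  refine ⟨optimal_one.trans ⟨fun _ => by linarith, fun _ => by linarith⟩,
    optimal_zero.trans ⟨fun _ => by linarith, fun _ => by linarith⟩, ?_⟩
  rintro ⟨h3, h10⟩ (_ | _) _
  · exact optimal_zero.2 (by linarith)
  · exact optimal_one.2 (by linarith)
end

section
/- In the coin-toss model, Bob's integrated Bayes risk under the randomised response mechanism q^(ω) satisfies R_B(q^(ω)) = 1/4 + (1/2)·min(ω, 1−ω) for every ω ∈ [0,1]. -/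
open scoped BigOperators

open CoinToss

/-! For 0-1 loss between two hypotheses, deciding one of them loses exactly the joint mass of the
other, so a Bayes rule loses `min (P(θ = 1/2, η = h)) (P(θ = 0, η = h))` at each release value `h`
and its risk is the sum of these minima. Under randomised response `P(θ = 1/2, η = h) = 1/4` for
both `h`, while `P(θ = 0, η = h)` is `(1 - ω)/2` or `ω/2`; the two minima add up to
`1/4 + min ω (1 - ω) / 2`. -/

namespace CoinToss

section

variable {H : Type*}

noncomputable def jointLossB (q : Bool → H → ℝ) (h : H) (d : ℝ) : ℝ :=
  ∑ t, ∑ x, coinJoint t x * q x h * LB (thetaVal t) d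

theorem RB_eq_sum_jointLossB [Fintype H] (q : Bool → H → ℝ) (dB : H → ℝ) :
    RB q dB = ∑ h, jointLossB q h (dB h) := by
  unfold RB jointLossB
  simp_rw [Finset.sum_comm (γ := H)]

theorem jointLossB_zero (q : Bool → H → ℝ) (h : H) :
    jointLossB q h 0 = (q false h + q true h) / 4 := by
  norm_num [jointLossB, coinJoint, thetaVal, LB, Fintype.sum_bool]
  ring

theorem jointLossB_half (q : Bool → H → ℝ) (h : H) :
    jointLossB q h (1 / 2) = q false h / 2 := by
  norm_num [jointLossB, coinJoint, thetaVal, LB, Fintype.sum_bool]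
  ring

theorem relP_eq_jointLossB_add (q : Bool → H → ℝ) (h : H) :
    relP q h = jointLossB q h 0 + jointLossB q h (1 / 2) := by
  rw [jointLossB_zero, jointLossB_half]
  norm_num [relP, coinJoint, Fintype.sum_bool]
  ring

theorem postLossB_le_postLossB_iff {q : Bool → H → ℝ} {h : H} (hp : 0 < relP q h) {d d' : ℝ} :
    postLossB q h d ≤ postLossB q h d' ↔ jointLossB q h d ≤ jointLossB q h d' :=
  div_le_div_iff_of_pos_right hp

theorem IsBayesB.jointLossB_eq_min {q : Bool → H → ℝ} {dB : H → ℝ} (hdB : IsBayesB q dB)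
    {h : H} (hp : 0 < relP q h) :
    jointLossB q h (dB h) = min (jointLossB q h 0) (jointLossB q h (1 / 2)) := by
  obtain ⟨hmem, hmin⟩ := hdB h hp
  have hle_zero := (postLossB_le_postLossB_iff hp).mp (hmin 0 (by simp))
  have hle_half := (postLossB_le_postLossB_iff hp).mp (hmin (1 / 2) (by simp))
  refine le_antisymm (le_min hle_zero hle_half) ?_
  rcases hmem with hd | hd <;> rw [hd]
  exacts [min_le_left _ _, min_le_right _ _]

theorem IsBayesB.RB_eq_sum_min [Fintype H] {q : Bool → H → ℝ} {dB : H → ℝ} (hdB : IsBayesB q dB)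
    (hp : ∀ h, 0 < relP q h) :
    RB q dB = ∑ h, min (jointLossB q h 0) (jointLossB q h (1 / 2)) := by
  rw [RB_eq_sum_jointLossB]
  exact Finset.sum_congr rfl fun h _ => hdB.jointLossB_eq_min (hp h)

end

theorem qrr_false_add_qrr_true (ω : ℝ) (h : Bool) : qrr ω false h + qrr ω true h = 1 := by
  cases h <;> simp [qrr]

theorem min_quarter_add_min_quarter (ω : ℝ) :
    min (1 / 4) (ω / 2) + min (1 / 4) ((1 - ω) / 2) = 1 / 4 + 1 / 2 * min ω (1 - ω) := by
  rcases le_total ω (1 - ω) with hω | hω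
  · rw [min_eq_left hω, min_eq_right (by linarith), min_eq_left (by linarith)]; ring
  · rw [min_eq_right hω, min_eq_left (by linarith), min_eq_right (by linarith)]; ring

end CoinToss

/-- In the coin-toss model, Bob's integrated Bayes risk under randomised response q^(ω)
satisfies R_B(q^(ω)) = 1/4 + (1/2)·min(ω, 1-ω) for every ω ∈ [0,1]. -/
theorem coin_toss_rr_bob_risk (ω : ℝ) (hω : ω ∈ Set.Icc (0:ℝ) 1)
    (dB : Bool → ℝ) (hdB : IsBayesB (qrr ω) dB) :
    RB (qrr ω) dB = 1/4 + (1/2) * min ω (1 - ω) := by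
  have hzero (h : Bool) : jointLossB (qrr ω) h 0 = 1 / 4 := by
    rw [jointLossB_zero, qrr_false_add_qrr_true]
  have hp (h : Bool) : 0 < relP (qrr ω) h := by
    rw [relP_eq_jointLossB_add, hzero, jointLossB_half]
    cases h <;> simp only [qrr] <;> norm_num <;> linarith [hω.1, hω.2]
  rw [hdB.RB_eq_sum_min hp, Fintype.sum_bool, hzero, hzero, jointLossB_half, jointLossB_half]
  simpa [qrr] using min_quarter_add_min_quarter ω
end

section
/- In the coin-toss model, Eve's integrated Bayes risk under the randomised response mechanism q^(ω) satisfies R_E(q^(ω)) = (13/4)ω for ω ∈ [0, 3/13], R_E(q^(ω)) = 3/4 for ω ∈ [3/13, 10/13], and R_E(q^(ω)) = (13/4)(1−ω) for ω ∈ [10/13, 1]. -/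
open scoped BigOperators

open CoinToss

set_option maxHeartbeats 2000000 in
/-- In the coin-toss model, Eve's integrated Bayes risk under randomised response q^(ω)
satisfies R_E(q^(ω)) = (13/4)ω on [0, 3/13], = 3/4 on [3/13, 10/13], and = (13/4)(1-ω)
on [10/13, 1]. -/
theorem coin_toss_rr_eve_risk (ω : ℝ) (hω : ω ∈ Set.Icc (0:ℝ) 1)
    (dE : Bool → Bool) (hdE : IsBayesE (qrr ω) dE) :
    (ω ∈ Set.Icc (0:ℝ) (3/13) → RE (qrr ω) dE = 13/4 * ω) ∧
    (ω ∈ Set.Icc (3/13 : ℝ) (10/13) → RE (qrr ω) dE = 3/4) ∧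
    (ω ∈ Set.Icc (10/13 : ℝ) 1 → RE (qrr ω) dE = 13/4 * (1 - ω)) := by
  obtain ⟨h0, h1⟩ := hω
  have hrF : 0 < relP (qrr ω) false := by
    simp [relP, coinJoint, qrr, Fintype.sum_bool]
    linarith
  have hrT : 0 < relP (qrr ω) true := by
    simp [relP, coinJoint, qrr, Fintype.sum_bool]
    linarith
  have hFf := hdE false hrF false
  have hFt := hdE false hrF true
  have hTf := hdE true hrT false
  have hTt := hdE true hrT true
  simp only [postLossE, div_le_div_iff_of_pos_right hrF] at hFf hFt
  simp only [postLossE, div_le_div_iff_of_pos_right hrT] at hTf hTt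
  simp [coinJoint, qrr, CoinToss.LE, Fintype.sum_bool] at hFf hFt hTf hTt
  refine ⟨fun ⟨ha, hb⟩ => ?_, fun ⟨ha, hb⟩ => ?_, fun ⟨ha, hb⟩ => ?_⟩ <;>
    cases hdf : dE false <;> cases hdt : dE true <;>
    simp [hdf, hdt, RE, coinJoint, qrr, CoinToss.LE, Fintype.sum_bool] at hFf hFt hTf hTt ⊢ <;>
    linarith
end

section
/- Let Θ and 𝒳 be finite spaces, π a prior on Θ, p(·|θ) a likelihood on 𝒳, L_B : Θ × 𝒟_B → ℝ a loss on a finite decision space 𝒟_B, and T : 𝒳 → 𝒮 a statistic such that the posterior distributions satisfy π(θ | x) = π(θ | T(x)) for every x with positive marginal probability (sufficiency of T for θ). Then Bob's integrated Bayes risk under the deterministic release η = T(X) equals his integrated Bayes risk under the full release η = X, i.e. R_B(q^T) = R_B(q^full). Combined with the fact that Eve's integrated Bayes risk satisfies R_E(q^full) ≤ R_E(q^T) for any Eve loss L_E, this yields R_A(q^T) ≤ R_A(q^full) for every λ > 0: releasing a sufficient statistic weakly dominates releasing the full dataset. -/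
open scoped BigOperators

namespace SuffPrivacy

variable {Θ X S DB DE : Type*}
  [Fintype Θ] [Fintype X] [Fintype S] [Fintype DB] [Fintype DE]

/-- Marginal probability of the data point `x`: p(x) = Σ_θ π(θ) p(x|θ). -/
noncomputable def margX (pr : Θ → ℝ) (lik : Θ → X → ℝ) (x : X) : ℝ :=
  ∑ t, pr t * lik t x

/-- Posterior probability π(θ | x). -/
noncomputable def postX (pr : Θ → ℝ) (lik : Θ → X → ℝ) (t : Θ) (x : X) : ℝ :=
  pr t * lik t x / margX pr lik x

/-- Marginal probability of T(X) = s. -/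
noncomputable def margT [DecidableEq S] (pr : Θ → ℝ) (lik : Θ → X → ℝ) (T : X → S) (s : S) : ℝ :=
  ∑ x, if T x = s then margX pr lik x else 0

/-- Posterior probability π(θ | T(X) = s). -/
noncomputable def postT [DecidableEq S] (pr : Θ → ℝ) (lik : Θ → X → ℝ) (T : X → S)
    (t : Θ) (s : S) : ℝ :=
  (∑ x, if T x = s then pr t * lik t x else 0) / margT pr lik T s

section Release

variable {G : Type*} [Fintype G] [DecidableEq G]

/-- Probability of the release value `s` under the deterministic release η = g(X). -/
noncomputable def relP (pr : Θ → ℝ) (lik : Θ → X → ℝ) (g : X → G) (s : G) : ℝ :=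
  ∑ t, ∑ x, if g x = s then pr t * lik t x else 0

/-- Bob's posterior expected loss of decision `d` given the release value `s`. -/
noncomputable def postLossB (pr : Θ → ℝ) (lik : Θ → X → ℝ) (LB : Θ → DB → ℝ)
    (g : X → G) (s : G) (d : DB) : ℝ :=
  (∑ t, ∑ x, if g x = s then pr t * lik t x * LB t d else 0) / relP pr lik g s

/-- Eve's posterior expected loss of decision `d` given the release value `s`. -/
noncomputable def postLossE (pr : Θ → ℝ) (lik : Θ → X → ℝ) (LE : X → DE → ℝ)
    (g : X → G) (s : G) (d : DE) : ℝ :=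
  (∑ t, ∑ x, if g x = s then pr t * lik t x * LE x d else 0) / relP pr lik g s

/-- Bayes optimality of a rule for Bob under deterministic release η = g(X). -/
def IsBayesB (pr : Θ → ℝ) (lik : Θ → X → ℝ) (LB : Θ → DB → ℝ)
    (g : X → G) (dB : G → DB) : Prop :=
  ∀ s, 0 < relP pr lik g s →
    ∀ d : DB, postLossB pr lik LB g s (dB s) ≤ postLossB pr lik LB g s d

/-- Bayes optimality of a rule for Eve under deterministic release η = g(X). -/
def IsBayesE (pr : Θ → ℝ) (lik : Θ → X → ℝ) (LE : X → DE → ℝ)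
    (g : X → G) (dE : G → DE) : Prop :=
  ∀ s, 0 < relP pr lik g s →
    ∀ d : DE, postLossE pr lik LE g s (dE s) ≤ postLossE pr lik LE g s d

/-- Bob's integrated Bayes risk R_B = E[L_B(θ, δ_B(g(X)))]. -/
noncomputable def RB (pr : Θ → ℝ) (lik : Θ → X → ℝ) (LB : Θ → DB → ℝ)
    (g : X → G) (dB : G → DB) : ℝ :=
  ∑ t, ∑ x, pr t * lik t x * LB t (dB (g x))

/-- Eve's integrated Bayes risk R_E = E[L_E(X, δ_E(g(X)))]. -/
noncomputable def RE (pr : Θ → ℝ) (lik : Θ → X → ℝ) (LE : X → DE → ℝ)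
    (g : X → G) (dE : G → DE) : ℝ :=
  ∑ t, ∑ x, pr t * lik t x * LE x (dE (g x))

end Release

end SuffPrivacy

open SuffPrivacy

section Aux

variable {Θ X S DB DE : Type*}
  [Fintype Θ] [Fintype X] [DecidableEq X] [Fintype S] [DecidableEq S]
  [Fintype DB] [Fintype DE]
  (pr : Θ → ℝ) (lik : Θ → X → ℝ)

lemma margX_nonneg (hpr0 : ∀ t, 0 ≤ pr t) (hlik0 : ∀ t x, 0 ≤ lik t x) (x : X) :
    0 ≤ margX pr lik x :=
  Finset.sum_nonneg fun t _ => mul_nonneg (hpr0 t) (hlik0 t x)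

lemma term_eq_zero (hpr0 : ∀ t, 0 ≤ pr t) (hlik0 : ∀ t x, 0 ≤ lik t x) {x : X}
    (h : margX pr lik x = 0) (t : Θ) : pr t * lik t x = 0 :=
  (Finset.sum_eq_zero_iff_of_nonneg
    (fun t _ => mul_nonneg (hpr0 t) (hlik0 t x))).mp h t (Finset.mem_univ t)

lemma relP_id (x : X) : relP pr lik (id : X → X) x = margX pr lik x := by
  unfold relP margX
  refine Finset.sum_congr rfl fun t _ => ?_
  simp

lemma relP_T (T : X → S) (s : S) : relP pr lik T s = margT pr lik T s := by
  unfold relP margT margX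
  rw [Finset.sum_comm]
  refine Finset.sum_congr rfl fun x _ => ?_
  split <;> simp

lemma margT_pos (hpr0 : ∀ t, 0 ≤ pr t) (hlik0 : ∀ t x, 0 ≤ lik t x) (T : X → S) {x : X}
    (h : 0 < margX pr lik x) : 0 < margT pr lik T (T x) := by
  have hle : margX pr lik x ≤ margT pr lik T (T x) := by
    unfold margT
    have := Finset.single_le_sum (f := fun y => if T y = T x then margX pr lik y else 0)
      (fun y _ => by
        by_cases hy : T y = T x <;> simp [hy, margX_nonneg pr lik hpr0 hlik0 y])
      (Finset.mem_univ x)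
    simpa using this
  linarith

lemma postLossB_id (LB : Θ → DB → ℝ) (x : X) (d : DB) :
    postLossB pr lik LB (id : X → X) x d = ∑ t, postX pr lik t x * LB t d := by
  unfold postLossB postX
  rw [relP_id]
  simp only [id_eq, Finset.sum_ite_eq' Finset.univ, Finset.mem_univ, if_true,
    div_mul_eq_mul_div]
  rw [← Finset.sum_div]

lemma postLossB_T (LB : Θ → DB → ℝ) (T : X → S) (s : S) (d : DB) :
    postLossB pr lik LB T s d = ∑ t, postT pr lik T t s * LB t d := by
  unfold postLossB postT
  rw [relP_T]
  simp only [div_mul_eq_mul_div]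
  rw [← Finset.sum_div]
  congr 1
  refine Finset.sum_congr rfl fun t _ => ?_
  rw [Finset.sum_mul]
  refine Finset.sum_congr rfl fun y _ => ?_
  split <;> simp

lemma fB_eq (LB : Θ → DB → ℝ) {x : X} (h : 0 < margX pr lik x) (d : DB) :
    (∑ t, pr t * lik t x * LB t d)
      = margX pr lik x * postLossB pr lik LB (id : X → X) x d := by
  unfold postLossB
  rw [relP_id]
  simp only [id_eq, Finset.sum_ite_eq' Finset.univ, Finset.mem_univ, if_true]
  rw [mul_comm, div_mul_cancel₀ _ h.ne']

lemma postLossE_id (LE : X → DE → ℝ) {x : X} (h : 0 < margX pr lik x) (d : DE) :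
    postLossE pr lik LE (id : X → X) x d = LE x d := by
  unfold postLossE
  rw [relP_id]
  simp only [id_eq, Finset.sum_ite_eq' Finset.univ, Finset.mem_univ, if_true]
  rw [← Finset.sum_mul]
  exact mul_div_cancel_left₀ _ h.ne'

end Aux

/-- If T is sufficient for θ (π(θ|x) = π(θ|T(x)) at every x of positive probability), then
Bob's integrated Bayes risk under the release η = T(X) equals that under the full release
η = X; moreover Eve's integrated Bayes risk satisfies R_E(q^full) ≤ R_E(q^T), and hence
R_A(q^T) ≤ R_A(q^full) for every λ > 0: releasing a sufficient statistic weakly dominates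
releasing the full dataset. -/
theorem sufficient_statistic_dominates
    {Θ X S DB DE : Type*}
    [Fintype Θ] [Fintype X] [DecidableEq X] [Fintype S] [DecidableEq S]
    [Fintype DB] [Fintype DE]
    (pr : Θ → ℝ) (hpr0 : ∀ t, 0 ≤ pr t) (hpr1 : ∑ t, pr t = 1)
    (lik : Θ → X → ℝ) (hlik0 : ∀ t x, 0 ≤ lik t x) (hlik1 : ∀ t, ∑ x, lik t x = 1)
    (LB : Θ → DB → ℝ) (LE : X → DE → ℝ)
    (T : X → S)
    (hsuff : ∀ x, 0 < margX pr lik x → ∀ t, postX pr lik t x = postT pr lik T t (T x)) :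
    (∀ (dB : X → DB) (dB' : S → DB),
      IsBayesB pr lik LB (id : X → X) dB → IsBayesB pr lik LB T dB' →
        RB pr lik LB (id : X → X) dB = RB pr lik LB T dB') ∧
    (∀ (dE : X → DE) (dE' : S → DE),
      IsBayesE pr lik LE (id : X → X) dE → IsBayesE pr lik LE T dE' →
        RE pr lik LE (id : X → X) dE ≤ RE pr lik LE T dE') ∧
    (∀ lam : ℝ, 0 < lam →
      ∀ (dB : X → DB) (dB' : S → DB) (dE : X → DE) (dE' : S → DE),
        IsBayesB pr lik LB (id : X → X) dB → IsBayesB pr lik LB T dB' →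
        IsBayesE pr lik LE (id : X → X) dE → IsBayesE pr lik LE T dE' →
          RB pr lik LB T dB' - lam * RE pr lik LE T dE'
            ≤ RB pr lik LB (id : X → X) dB - lam * RE pr lik LE (id : X → X) dE) := by
  have hBob : ∀ (dB : X → DB) (dB' : S → DB),
      IsBayesB pr lik LB (id : X → X) dB → IsBayesB pr lik LB T dB' →
        RB pr lik LB (id : X → X) dB = RB pr lik LB T dB' := by
    intro dB dB' hB hB'
    have h1 : RB pr lik LB (id : X → X) dB
        = ∑ x, ∑ t, pr t * lik t x * LB t (dB x) := Finset.sum_comm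
    have h2 : RB pr lik LB T dB'
        = ∑ x, ∑ t, pr t * lik t x * LB t (dB' (T x)) := Finset.sum_comm
    rw [h1, h2]
    refine Finset.sum_congr rfl fun x _ => ?_
    rcases (margX_nonneg pr lik hpr0 hlik0 x).lt_or_eq with hpos | hzero
    · have hpx : 0 < relP pr lik (id : X → X) x := by rw [relP_id]; exact hpos
      have hpT : 0 < relP pr lik T (T x) := by
        rw [relP_T]; exact margT_pos pr lik hpr0 hlik0 T hpos
      have he : ∀ d : DB,
          postLossB pr lik LB (id : X → X) x d = postLossB pr lik LB T (T x) d := by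
        intro d
        rw [postLossB_id, postLossB_T]
        exact Finset.sum_congr rfl fun t _ => by rw [hsuff x hpos t]
      have hle1 := hB x hpx (dB' (T x))
      have hle2 := hB' (T x) hpT (dB x)
      rw [← he, ← he] at hle2
      have heq : postLossB pr lik LB (id : X → X) x (dB x)
          = postLossB pr lik LB (id : X → X) x (dB' (T x)) := le_antisymm hle1 hle2
      rw [fB_eq pr lik LB hpos, fB_eq pr lik LB hpos, heq]
    · refine Eq.trans (Finset.sum_eq_zero fun t _ => ?_)
        (Finset.sum_eq_zero fun t _ => ?_).symm <;>
      · rw [term_eq_zero pr lik hpr0 hlik0 hzero.symm t, zero_mul]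
  have hEve : ∀ (dE : X → DE) (dE' : S → DE),
      IsBayesE pr lik LE (id : X → X) dE → IsBayesE pr lik LE T dE' →
        RE pr lik LE (id : X → X) dE ≤ RE pr lik LE T dE' := by
    intro dE dE' hE hE'
    have h1 : RE pr lik LE (id : X → X) dE
        = ∑ x, ∑ t, pr t * lik t x * LE x (dE x) := Finset.sum_comm
    have h2 : RE pr lik LE T dE'
        = ∑ x, ∑ t, pr t * lik t x * LE x (dE' (T x)) := Finset.sum_comm
    rw [h1, h2]
    refine Finset.sum_le_sum fun x _ => ?_
    rcases (margX_nonneg pr lik hpr0 hlik0 x).lt_or_eq with hpos | hzero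
    · have hpx : 0 < relP pr lik (id : X → X) x := by rw [relP_id]; exact hpos
      have hle := hE x hpx (dE' (T x))
      rw [postLossE_id pr lik LE hpos, postLossE_id pr lik LE hpos] at hle
      exact Finset.sum_le_sum fun t _ =>
        mul_le_mul_of_nonneg_left hle (mul_nonneg (hpr0 t) (hlik0 t x))
    · refine le_of_eq ?_
      refine Eq.trans (Finset.sum_eq_zero fun t _ => ?_)
        (Finset.sum_eq_zero fun t _ => ?_).symm <;>
      · rw [term_eq_zero pr lik hpr0 hlik0 hzero.symm t, zero_mul]
  refine ⟨hBob, hEve, fun lam hlam dB dB' dE dE' h1 h2 h3 h4 => ?_⟩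
  rw [hBob dB dB' h1 h2]
  have := mul_le_mul_of_nonneg_left (hEve dE dE' h3 h4) hlam.le
  linarith
end
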